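/- The Cantor space {0,1}^ℕ is (T,F)-amenable: there exists a sequence of continuous maps μ_N : {0,1}^ℕ → Prob(T/F) with lim_N sup_{x} ‖ g·μ_N(x) − μ_N(g x) ‖_1 = 0 for every g ∈ T, where T, F are Thompson's groups and T/F is the coset space. -/

import Mathlib

open Filter Topology

/-- Cantor space `{0,1}^ℕ`. -/
abbrev Cantor := ℕ → Bool

/-- `trunc x j = x_{[1,j]}0^∞`: agrees with `x` on the first `j` coordinates, `0` afterwards. -/
def trunc (x : Cantor) (j : ℕ) : Cantor := fun n => if n < j then x n else false

/-- `D`: the eventually-zero sequences. -/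
def EvZero (x : Cantor) : Prop := ∃ k, ∀ l ≥ k, x l = false

/-- The cylinder set `C(w)` of sequences beginning with the finite word `w`. -/
def cyl (w : List Bool) : Set Cantor := {x | ∀ i, (h : i < w.length) → x i = w.get ⟨i, h⟩}

/-- Concatenation `w·x` of a finite word with an infinite sequence. -/
def wordApp (w : List Bool) (x : Cantor) : Cantor :=
  fun n => if h : n < w.length then w.get ⟨n, h⟩ else x (n - w.length)

/-- `s` is given by the table `(w, z)`: the cylinders of the `w i` (resp. `z i`) partition
Cantor space, and `s (w i · x) = z i · x` for all `i, x`. -/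
def IsTable (s : Cantor ≃ₜ Cantor) (n : ℕ) (w z : Fin n → List Bool) : Prop :=
  (∀ x : Cantor, ∃! i, x ∈ cyl (w i)) ∧ (∀ x : Cantor, ∃! i, x ∈ cyl (z i)) ∧
  (∀ i x, s (wordApp (w i) x) = wordApp (z i) x)

/-- Membership in Thompson's group `V` (tabular form). -/
def InV (s : Cantor ≃ₜ Cantor) : Prop := ∃ n w z, IsTable s n w z

/-- `k(s)` for a table. -/
def kTable (n : ℕ) (w z : Fin n → List Bool) : ℕ :=
  Finset.univ.sup fun i => max (w i).length ((z i).length - (w i).length)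

open Classical in
/-- `μ_N(x)(y) = (1/N) · #{1 ≤ j ≤ N : x_{[1,j]}0^∞ = y}`. -/
noncomputable def muN (N : ℕ) (x : Cantor) (y : Cantor) : ℝ :=
  (N : ℝ)⁻¹ * ((Finset.Icc 1 N).filter fun j => trunc x j = y).card

/-- The dyadic value `0.w` of a finite binary word. -/
def wval (w : List Bool) : ℚ :=
  ∑ i ∈ Finset.range w.length, if w.getD i false then ((2 : ℚ) ^ (i + 1))⁻¹ else 0

/-- A table for an element of Thompson's group `T`: the domain cylinders are in increasing
order and the range cylinders are in cyclically rotated increasing order. -/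
def IsTTable (s : Cantor ≃ₜ Cantor) (n : ℕ) (w z : Fin n → List Bool) : Prop :=
  IsTable s n w z ∧ (∀ i j : Fin n, i < j → wval (w i) < wval (w j)) ∧
  ∃ r : ℕ, ∀ i j : Fin n, ((i : ℕ) + r) % n < ((j : ℕ) + r) % n → wval (z i) < wval (z j)

/-- Membership in Thompson's group `T` (acting on the Cantor set / the circle). -/
def InT (s : Cantor ≃ₜ Cantor) : Prop := ∃ n w z, IsTTable s n w z

/-- A table for an element of Thompson's group `F`: domain and range cylinders both in
increasing order. -/
def IsFTable (s : Cantor ≃ₜ Cantor) (n : ℕ) (w z : Fin n → List Bool) : Prop :=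
  IsTable s n w z ∧ (∀ i j : Fin n, i < j → wval (w i) < wval (w j)) ∧
  (∀ i j : Fin n, i < j → wval (z i) < wval (z j))

/-- Membership in Thompson's group `F`. -/
def InF (s : Cantor ≃ₜ Cantor) : Prop := ∃ n w z, IsFTable s n w z

instance : Group (Cantor ≃ₜ Cantor) where
  mul f g := g.trans f
  one := Homeomorph.refl _
  inv := Homeomorph.symm
  mul_assoc _ _ _ := rfl
  one_mul _ := rfl
  mul_one _ := rfl
  inv_mul_cancel f := Homeomorph.ext fun x => f.symm_apply_apply x

instance : MulAction (Cantor ≃ₜ Cantor) Cantor where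
  smul g x := g x
  one_smul _ := rfl
  mul_smul _ _ _ := rfl

/-- Thompson's group `T`, as a subgroup of the homeomorphism group of the Cantor set
(the closure is superfluous since `InT` is closed under the group operations). -/
def TGrp : Subgroup (Cantor ≃ₜ Cantor) := Subgroup.closure {s | InT s}

/-- Thompson's group `F`. -/
def FGrp : Subgroup (Cantor ≃ₜ Cantor) := Subgroup.closure {s | InF s}

/-- `F` viewed as a subgroup of `T`. -/
def FinT : Subgroup TGrp := FGrp.subgroupOf TGrp

/-- The constant-zero sequence `0^∞` (the point `1 ∈ S¹`). -/
def zeroSeq : Cantor := fun _ => false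
/-! ### Section 1: basic lemmas on words, cylinders, trunc -/

lemma wordApp_lt {w : List Bool} {x : Cantor} {n : ℕ} (h : n < w.length) :
    wordApp w x n = w.get ⟨n, h⟩ := by simp [wordApp, h]

lemma wordApp_ge {w : List Bool} {x : Cantor} {n : ℕ} (h : w.length ≤ n) :
    wordApp w x n = x (n - w.length) := by
  simp [wordApp, Nat.not_lt.2 h]

lemma wordApp_mem_cyl (w : List Bool) (x : Cantor) : wordApp w x ∈ cyl w := by
  intro i h; exact wordApp_lt h

/-- shift by k -/
def shiftk (k : ℕ) (x : Cantor) : Cantor := fun n => x (n + k)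

lemma eq_wordApp_of_mem_cyl {w : List Bool} {x : Cantor} (h : x ∈ cyl w) :
    x = wordApp w (shiftk w.length x) := by
  funext n
  by_cases hn : n < w.length
  · rw [wordApp_lt hn]; exact h n hn
  · rw [wordApp_ge (Nat.not_lt.1 hn)]
    simp [shiftk, Nat.sub_add_cancel (Nat.not_lt.1 hn)]

lemma wordApp_append (a b : List Bool) (x : Cantor) :
    wordApp (a ++ b) x = wordApp a (wordApp b x) := by
  funext n
  by_cases h1 : n < a.length
  · rw [wordApp_lt (by simp; omega), wordApp_lt h1]
    simp [List.getElem_append_left h1]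
  · push_neg at h1
    rw [wordApp_ge h1]
    by_cases h2 : n < (a ++ b).length
    · rw [wordApp_lt h2, wordApp_lt (by simp at h2 ⊢; omega)]
      simp [List.getElem_append_right h1]
    · push_neg at h2
      rw [wordApp_ge (by simpa using h2), wordApp_ge (by simp at h2; omega)]
      congr 1; simp; omega

lemma cyl_append_subset (a b : List Bool) : cyl (a ++ b) ⊆ cyl a := by
  intro x h i hi
  have := h i (by simp; omega)
  rw [List.get_eq_getElem, List.getElem_append_left hi] at this
  simpa using this

lemma mem_cyl_getD {w : List Bool} {x : Cantor} :
    x ∈ cyl w ↔ ∀ i < w.length, x i = w.getD i false := by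
  constructor
  · intro h i hi; rw [h i hi, List.getD_eq_getElem _ _ hi]; simp
  · intro h i hi; rw [h i hi, List.getD_eq_getElem _ _ hi]; simp

lemma trunc_mem_cyl {w : List Bool} {x : Cantor} (h : x ∈ cyl w) {j : ℕ}
    (hj : w.length ≤ j) : trunc x j ∈ cyl w := by
  intro i hi; rw [trunc, if_pos (lt_of_lt_of_le hi hj)]; exact h i hi

lemma wordApp_trunc (w : List Bool) (t : Cantor) (l : ℕ) :
    wordApp w (trunc t l) = trunc (wordApp w t) (l + w.length) := by
  funext n
  by_cases h1 : n < w.length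
  · rw [wordApp_lt h1, trunc, if_pos (by omega), wordApp_lt h1]
  · push_neg at h1
    rw [wordApp_ge h1, trunc, trunc]
    by_cases h2 : n - w.length < l
    · rw [if_pos h2, if_pos (by omega), wordApp_ge h1]
    · rw [if_neg h2, if_neg (by omega)]

lemma trunc_eq_wordApp {w : List Bool} {x : Cantor} (h : x ∈ cyl w) {j : ℕ}
    (hj : w.length ≤ j) :
    trunc x j = wordApp w (trunc (shiftk w.length x) (j - w.length)) := by
  rw [wordApp_trunc, Nat.sub_add_cancel hj]
  conv_lhs => rw [eq_wordApp_of_mem_cyl h]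

lemma evZero_trunc (x : Cantor) (j : ℕ) : EvZero (trunc x j) :=
  ⟨j, fun l hl => by simp [trunc, Nat.not_lt.2 hl]⟩

lemma trunc_eq_self_of_evZero {x : Cantor} (h : EvZero x) : ∃ k, ∀ j ≥ k, trunc x j = x := by
  obtain ⟨k, hk⟩ := h
  refine ⟨k, fun j hj => funext fun n => ?_⟩
  by_cases hn : n < j
  · simp [trunc, hn]
  · simp [trunc, hn, (hk n (by omega)).symm]

lemma wordApp_zeroSeq_coord (w : List Bool) (n : ℕ) (hw : ∀ i < w.length, w.getD i false = false) :
    wordApp w zeroSeq n = false := by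
  by_cases h : n < w.length
  · rw [wordApp_lt h]; have := hw n h; rwa [List.getD_eq_getElem _ _ h] at this; 
  · rw [wordApp_ge (Nat.not_lt.1 h)]; rfl

lemma zeroSeq_mem_cyl_iff {w : List Bool} :
    zeroSeq ∈ cyl w ↔ ∀ i < w.length, w.getD i false = false := by
  rw [mem_cyl_getD]
  exact ⟨fun h i hi => (h i hi).symm, fun h i hi => (h i hi).symm⟩

lemma wordApp_allFalse_zeroSeq {w : List Bool} (hw : ∀ i < w.length, w.getD i false = false) :
    wordApp w zeroSeq = zeroSeq := funext fun n => wordApp_zeroSeq_coord w n hw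

/-! ### Section 2: lexicographic order on Cantor space -/

/-- strict lexicographic order -/
def clt (p q : Cantor) : Prop :=
  ∃ n, (∀ m < n, p m = q m) ∧ p n = false ∧ q n = true

lemma clt_irrefl (p : Cantor) : ¬ clt p p := by
  rintro ⟨n, _, h1, h2⟩; rw [h1] at h2; exact Bool.false_ne_true h2

lemma clt_asymm {p q : Cantor} (h : clt p q) : ¬ clt q p := by
  obtain ⟨n, hn, hn1, hn2⟩ := h
  rintro ⟨m, hm, hm1, hm2⟩
  rcases lt_trichotomy n m with h' | h' | h'
  · have := hm n h'
    rw [hn2, hn1] at this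
    exact absurd this (by simp)
  · subst h'
    rw [hn1] at hm2
    exact absurd hm2 (by simp)
  · have := hn m h'
    rw [hm1, hm2] at this
    exact absurd this (by simp)

lemma clt_trichotomy {p q : Cantor} (h : p ≠ q) : clt p q ∨ clt q p := by
  have hex : ∃ n, p n ≠ q n := by
    by_contra hc; push_neg at hc; exact h (funext hc)
  classical
  have hn : p (Nat.find hex) ≠ q (Nat.find hex) := Nat.find_spec hex
  have hmin : ∀ m < Nat.find hex, p m = q m := fun m hm => by
    by_contra hc
    have := Nat.find_min' hex hc
    omega
  cases hp : p (Nat.find hex) <;> cases hq : q (Nat.find hex)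
  · rw [hp, hq] at hn; exact absurd rfl hn
  · exact Or.inl ⟨Nat.find hex, hmin, hp, hq⟩
  · exact Or.inr ⟨Nat.find hex, fun m hm => (hmin m hm).symm, hq, hp⟩
  · rw [hp, hq] at hn; exact absurd rfl hn

lemma clt_trans {p q r : Cantor} (h1 : clt p q) (h2 : clt q r) : clt p r := by
  obtain ⟨n, hn, hn1, hn2⟩ := h1
  obtain ⟨m, hm, hm1, hm2⟩ := h2
  rcases lt_trichotomy n m with h' | h' | h'
  · exact ⟨n, fun k hk => (hn k hk).trans (hm k (by omega)), hn1, by rw [← hm n h']; exact hn2⟩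
  · subst h'; rw [hn2] at hm1; exact absurd hm1 (by simp)
  · exact ⟨m, fun k hk => (hn k (by omega)).trans (hm k hk), by rw [hn m h']; exact hm1, hm2⟩

lemma clt_ne {p q : Cantor} (h : clt p q) : p ≠ q := by
  rintro rfl; exact clt_irrefl p h

lemma zeroSeq_clt {p : Cantor} (h : p ≠ zeroSeq) : clt zeroSeq p := by
  rcases clt_trichotomy (show zeroSeq ≠ p from fun e => h e.symm) with h1 | h1
  · exact h1
  · obtain ⟨n, _, _, h3⟩ := h1; exact absurd h3 (by simp [zeroSeq])

/-- cyclic order (with respect to lex) -/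
def cyc (p q r : Cantor) : Prop :=
  (clt p q ∧ clt q r) ∨ (clt q r ∧ clt r p) ∨ (clt r p ∧ clt p q)

lemma cyc_total {p q r : Cantor} (hpq : p ≠ q) (hqr : q ≠ r) (hrp : r ≠ p) :
    cyc p q r ∨ cyc p r q := by
  rcases clt_trichotomy hpq with h1 | h1 <;> rcases clt_trichotomy hqr with h2 | h2 <;>
    rcases clt_trichotomy hrp with h3 | h3 <;>
    first
      | (left; unfold cyc; tauto)
      | (right; unfold cyc; tauto)
      | (exfalso; exact clt_asymm (clt_trans h1 h2) h3)
      | (exfalso; exact clt_asymm (clt_trans h2 h3) h1)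

lemma cyc_not_swap {p q r : Cantor} (h : cyc p q r) : ¬ cyc p r q := by
  rintro (⟨a, b⟩ | ⟨a, b⟩ | ⟨a, b⟩) <;>
    rcases h with ⟨c, d⟩ | ⟨c, d⟩ | ⟨c, d⟩ <;>
    first
      | exact clt_asymm a (clt_trans c d)
      | exact clt_asymm b (clt_trans c d)
      | exact clt_asymm c (clt_trans a b)
      | exact clt_asymm d (clt_trans a b)
      | exact clt_asymm a c
      | exact clt_asymm a d
      | exact clt_asymm b c
      | exact clt_asymm b d

/-! ### Section 3: wval and order vs cylinders -/

lemma geo_sum (t L : ℕ) (h : t ≤ L) :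
    ∑ i ∈ Finset.Ico t L, ((2:ℚ)^(i+1))⁻¹ = ((2:ℚ)^t)⁻¹ - ((2:ℚ)^L)⁻¹ := by
  induction L with
  | zero => interval_cases t; simp
  | succ L ih =>
    rcases Nat.lt_or_ge t (L+1) with h' | h'
    · have ht : t ≤ L := by omega
      rw [Finset.sum_Ico_succ_top ht, ih ht]
      have : (2:ℚ)^L ≠ 0 := by positivity
      field_simp
      ring
    · have : t = L + 1 := by omega
      subst this
      simp

lemma wval_nonneg (w : List Bool) : 0 ≤ wval w := by
  apply Finset.sum_nonneg
  intro i _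
  split <;> positivity

private lemma wval_split (c : List Bool) (t : ℕ) (h : t ≤ c.length) :
    wval c = (∑ i ∈ Finset.range t, if c.getD i false then ((2:ℚ)^(i+1))⁻¹ else 0)
      + ∑ i ∈ Finset.Ico t c.length, if c.getD i false then ((2:ℚ)^(i+1))⁻¹ else 0 := by
  rw [wval, Finset.range_eq_Ico, ← Finset.sum_Ico_consecutive _ (Nat.zero_le t) h]
  rw [Finset.range_eq_Ico]

lemma wval_lt_of_diff {a b : List Bool} {t : ℕ} (ha : t < a.length) (hb : t < b.length)
    (hagree : ∀ s < t, a.getD s false = b.getD s false)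
    (hat : a.getD t false = false) (hbt : b.getD t false = true) :
    wval a < wval b := by
  have h2a : (0:ℚ) < (2:ℚ)^a.length := by positivity
  have upper : wval a < (∑ i ∈ Finset.range t, if a.getD i false then ((2:ℚ)^(i+1))⁻¹ else 0)
      + ((2:ℚ)^(t+1))⁻¹ := by
    rw [wval_split a t (le_of_lt ha)]
    apply (add_lt_add_iff_left _).2
    rw [Finset.sum_eq_sum_Ico_succ_bot ha, hat, if_neg (by simp)]
    calc (0:ℚ) + ∑ i ∈ Finset.Ico (t+1) a.length,
          (if a.getD i false then ((2:ℚ)^(i+1))⁻¹ else 0)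
        ≤ ∑ i ∈ Finset.Ico (t+1) a.length, ((2:ℚ)^(i+1))⁻¹ := by
          rw [zero_add]
          apply Finset.sum_le_sum
          intro i _
          split
          · exact le_rfl
          · positivity
      _ = ((2:ℚ)^(t+1))⁻¹ - ((2:ℚ)^a.length)⁻¹ := geo_sum _ _ (by omega)
      _ < ((2:ℚ)^(t+1))⁻¹ := by
          have : (0:ℚ) < ((2:ℚ)^a.length)⁻¹ := by positivity
          linarith
  have lower : (∑ i ∈ Finset.range t, if b.getD i false then ((2:ℚ)^(i+1))⁻¹ else 0)
      + ((2:ℚ)^(t+1))⁻¹ ≤ wval b := by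
    rw [wval_split b t (le_of_lt hb)]
    apply (add_le_add_iff_left _).2
    calc ((2:ℚ)^(t+1))⁻¹ = (if b.getD t false then ((2:ℚ)^(t+1))⁻¹ else 0) := by rw [hbt, if_pos rfl]
      _ ≤ ∑ i ∈ Finset.Ico t b.length, if b.getD i false then ((2:ℚ)^(i+1))⁻¹ else 0 :=
          Finset.single_le_sum (f := fun i => if b.getD i false then ((2:ℚ)^(i+1))⁻¹ else 0)
            (fun i _ => by show (0:ℚ) ≤ (if b.getD i false then ((2:ℚ)^(i+1))⁻¹ else 0); split
                           · positivity
                           · exact le_rfl)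
            (by simp [Finset.mem_Ico]; omega)
  have hsum : (∑ i ∈ Finset.range t, if a.getD i false then ((2:ℚ)^(i+1))⁻¹ else 0)
      = ∑ i ∈ Finset.range t, if b.getD i false then ((2:ℚ)^(i+1))⁻¹ else 0 := by
    apply Finset.sum_congr rfl
    intro i hi
    rw [hagree i (Finset.mem_range.1 hi)]
  rw [hsum] at upper
  linarith

lemma exists_firstdiff {a b : List Bool} (h : ¬ a <+: b) (h' : ¬ b <+: a) :
    ∃ t, t < a.length ∧ t < b.length ∧ (∀ s < t, a.getD s false = b.getD s false) ∧
      a.getD t false ≠ b.getD t false := by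
  classical
  have hex : ∃ t, t < a.length ∧ t < b.length ∧ a.getD t false ≠ b.getD t false := by
    by_contra hc
    push_neg at hc
    rcases le_or_gt a.length b.length with hl | hl
    · apply h
      have : a = b.take a.length := by
        apply List.ext_getElem (by simp [Nat.min_eq_left hl])
        intro i h1 h2
        have := hc i h1 (by simp at h2; omega)
        rw [List.getD_eq_getElem _ _ h1, List.getD_eq_getElem _ _ (by simp at h2 ⊢; omega)] at this
        simpa using this
      rw [this]
      exact List.take_prefix _ _
    · apply h'
      have : b = a.take b.length := by
        apply List.ext_getElem (by simp [Nat.min_eq_left (le_of_lt hl)])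
        intro i h1 h2
        have := hc i (by simp at h2; omega) h1
        rw [List.getD_eq_getElem _ _ (by simp at h2 ⊢; omega), List.getD_eq_getElem _ _ h1] at this
        simpa using this.symm
      rw [this]
      exact List.take_prefix _ _
  refine ⟨Nat.find hex, (Nat.find_spec hex).1, (Nat.find_spec hex).2.1, ?_, (Nat.find_spec hex).2.2⟩
  intro s hs
  by_contra hc
  have := Nat.find_min' hex ⟨by have := (Nat.find_spec hex).1; omega,
    by have := (Nat.find_spec hex).2.1; omega, hc⟩
  omega

lemma clt_of_cyl {a b : List Bool} {x y : Cantor} (hx : x ∈ cyl a) (hy : y ∈ cyl b)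
    (h : ¬ a <+: b) (h' : ¬ b <+: a) (hw : wval a < wval b) : clt x y := by
  obtain ⟨t, ha, hb, hagree, hne⟩ := exists_firstdiff h h'
  have hxa := mem_cyl_getD.1 hx
  have hyb := mem_cyl_getD.1 hy
  cases hat : a.getD t false <;> cases hbt : b.getD t false
  · rw [hat, hbt] at hne; exact absurd rfl hne
  · refine ⟨t, fun m hm => ?_, ?_, ?_⟩
    · rw [hxa m (by omega), hyb m (by omega), hagree m hm]
    · rw [hxa t ha, hat]
    · rw [hyb t hb, hbt]
  · exact absurd (wval_lt_of_diff hb ha (fun s hs => (hagree s hs).symm) hbt hat)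
      (by intro hlt; exact absurd hw (lt_asymm hlt))
  · rw [hat, hbt] at hne; exact absurd rfl hne

lemma wval_ne_of_incomp {a b : List Bool} (h : ¬ a <+: b) (h' : ¬ b <+: a) :
    wval a ≠ wval b := by
  obtain ⟨t, ha, hb, hagree, hne⟩ := exists_firstdiff h h'
  cases hat : a.getD t false <;> cases hbt : b.getD t false
  · rw [hat, hbt] at hne; exact absurd rfl hne
  · exact ne_of_lt (wval_lt_of_diff ha hb hagree hat hbt)
  · exact ne_of_gt (wval_lt_of_diff hb ha (fun s hs => (hagree s hs).symm) hbt hat)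
  · rw [hat, hbt] at hne; exact absurd rfl hne

lemma incomp_of_partition {n : ℕ} {w : Fin n → List Bool}
    (hpart : ∀ x : Cantor, ∃! i : Fin n, x ∈ cyl (w i)) {i j : Fin n} (hij : i ≠ j) :
    ¬ w i <+: w j := by
  rintro ⟨e, he⟩
  have hx : wordApp (w j) zeroSeq ∈ cyl (w j) := wordApp_mem_cyl _ _
  have hx' : wordApp (w j) zeroSeq ∈ cyl (w i) := by
    rw [← he]
    exact cyl_append_subset _ _ (by rw [he]; exact hx)
  obtain ⟨k, _, hk⟩ := hpart (wordApp (w j) zeroSeq)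
  exact hij ((hk i hx').trans (hk j hx).symm)

lemma clt_wordApp_iff {w : List Bool} {x y : Cantor} :
    clt (wordApp w x) (wordApp w y) ↔ clt x y := by
  constructor
  · rintro ⟨n, hn, h1, h2⟩
    have hlen : w.length ≤ n := by
      by_contra hc
      push_neg at hc
      rw [wordApp_lt hc] at h1
      rw [wordApp_lt hc] at h2
      rw [h1] at h2
      exact absurd h2 (by simp)
    refine ⟨n - w.length, fun m hm => ?_, ?_, ?_⟩
    · have := hn (m + w.length) (by omega)
      rwa [wordApp_ge (by omega), wordApp_ge (by omega), Nat.add_sub_cancel] at this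
    · rw [← h1, wordApp_ge hlen]
    · rw [← h2, wordApp_ge hlen]
  · rintro ⟨n, hn, h1, h2⟩
    refine ⟨n + w.length, fun m hm => ?_, ?_, ?_⟩
    · by_cases hc : m < w.length
      · rw [wordApp_lt hc, wordApp_lt hc]
      · push_neg at hc
        rw [wordApp_ge hc, wordApp_ge hc]
        exact hn _ (by omega)
    · rw [wordApp_ge (by omega), Nat.add_sub_cancel]; exact h1
    · rw [wordApp_ge (by omega), Nat.add_sub_cancel]; exact h2

/-! ### Section 4: binary words of fixed length -/

def numOf (x : Cantor) : ℕ → ℕ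
  | 0 => 0
  | K+1 => 2 * numOf x K + (x K).toNat

def binWord (K a : ℕ) : List Bool := List.ofFn (fun i : Fin K => a.testBit (K - 1 - i))

@[simp] lemma binWord_length (K a : ℕ) : (binWord K a).length = K := by simp [binWord]

lemma binWord_getD {K a i : ℕ} (h : i < K) :
    (binWord K a).getD i false = a.testBit (K - 1 - i) := by
  rw [List.getD_eq_getElem _ _ (by simp [h])]
  simp [binWord]

lemma numOf_lt (x : Cantor) (K : ℕ) : numOf x K < 2^K := by
  induction K with
  | zero => simp [numOf]
  | succ K ih =>
    have : (x K).toNat ≤ 1 := Bool.toNat_le _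
    simp only [numOf, pow_succ]
    omega

lemma numOf_eq {x : Cantor} {a K : ℕ} (ha : a < 2^K)
    (h : ∀ i < K, x i = a.testBit (K - 1 - i)) : numOf x K = a := by
  induction K generalizing a with
  | zero => simp at ha; simp [numOf, ha]
  | succ K ih =>
    have h2 : numOf x K = a / 2 := by
      apply ih (by omega)
      intro i hi
      rw [show K - 1 - i = (K - i) - 1 by omega, ← Nat.testBit_succ]
      rw [show (K - i - 1).succ = K - i by omega]
      exact h i (by omega)
    have h3 : x K = a.testBit 0 := by
      have := h K (by omega)
      rwa [show K + 1 - 1 - K = 0 by omega] at this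
    simp only [numOf, h2, h3, Nat.testBit_zero]
    have := Nat.div_add_mod a 2
    rcases Nat.mod_two_eq_zero_or_one a with h4 | h4 <;> simp [h4] <;> omega

lemma testBit_numOf {x : Cantor} {K i : ℕ} (h : i < K) :
    (numOf x K).testBit (K - 1 - i) = x i := by
  induction K with
  | zero => omega
  | succ K ih =>
    rcases Nat.lt_or_ge i K with hi | hi
    · rw [show K + 1 - 1 - i = (K - 1 - i) + 1 by omega, Nat.testBit_succ]
      have : (2 * numOf x K + (x K).toNat) / 2 = numOf x K := by
        have : (x K).toNat ≤ 1 := Bool.toNat_le _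
        omega
      rw [show numOf x (K+1) = 2 * numOf x K + (x K).toNat from rfl, this]
      exact ih hi
    · have hik : i = K := by omega
      rw [hik, show K + 1 - 1 - K = 0 by omega, Nat.testBit_zero]
      rw [show numOf x (K+1) = 2 * numOf x K + (x K).toNat from rfl]
      rcases Bool.eq_false_or_eq_true (x K) with h' | h' <;> rw [h'] <;> simp <;> omega

lemma mem_cyl_binWord {K a : ℕ} {x : Cantor} :
    x ∈ cyl (binWord K a) ↔ ∀ i < K, x i = a.testBit (K - 1 - i) := by
  rw [mem_cyl_getD]
  constructor
  · intro h i hi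
    rw [h i (by simp [hi]), binWord_getD hi]
  · intro h i hi
    simp only [binWord_length] at hi
    rw [h i hi, binWord_getD hi]

lemma mem_cyl_binWord_numOf (x : Cantor) (K : ℕ) : x ∈ cyl (binWord K (numOf x K)) :=
  mem_cyl_binWord.2 fun i hi => (testBit_numOf hi).symm

lemma binWord_partition (K : ℕ) (x : Cantor) :
    ∃! a : Fin (2^K), x ∈ cyl (binWord K (a : ℕ)) := by
  refine ⟨⟨numOf x K, numOf_lt x K⟩, mem_cyl_binWord_numOf x K, ?_⟩
  intro b hb
  have : numOf x K = (b : ℕ) := numOf_eq b.2 (mem_cyl_binWord.1 hb)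
  exact Fin.ext this.symm

lemma wval_append_single (w : List Bool) (b : Bool) :
    wval (w ++ [b]) = wval w + if b then ((2:ℚ)^(w.length+1))⁻¹ else 0 := by
  rw [wval, wval]
  simp only [List.length_append, List.length_singleton]
  rw [Finset.sum_range_succ]
  congr 1
  · apply Finset.sum_congr rfl
    intro i hi
    have hi' := Finset.mem_range.1 hi
    rw [List.getD_eq_getElem _ _ (by simp; omega), List.getD_eq_getElem _ _ hi',
      List.getElem_append_left hi']
  · rw [List.getD_eq_getElem _ _ (by simp), List.getElem_append_right (le_refl _)]
    simp

lemma binWord_succ (K a : ℕ) : binWord (K+1) a = binWord K (a/2) ++ [a.testBit 0] := by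
  apply List.ext_getElem (by simp)
  intro i h1 h2
  simp only [binWord_length] at h1
  rcases Nat.lt_or_ge i K with hi | hi
  · rw [List.getElem_append_left (by simpa using hi)]
    simp only [binWord, List.getElem_ofFn]
    rw [show K + 1 - 1 - i = (K - 1 - i) + 1 by omega, Nat.testBit_succ]
  · have hik : i = K := by omega
    subst hik
    have e : (binWord i (a/2) ++ [a.testBit 0])[i]'h2 = a.testBit 0 := by
      rw [List.getElem_append_right (by simp)]
      simp
    rw [e]
    simp only [binWord, List.getElem_ofFn]
    congr 1
    omega

lemma wval_binWord {K a : ℕ} (h : a < 2^K) : wval (binWord K a) = (a : ℚ) / 2^K := by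
  induction K generalizing a with
  | zero =>
    simp at h
    simp [h, binWord, wval]
  | succ K ih =>
    rw [binWord_succ, wval_append_single, ih (by omega), binWord_length]
    have hmod := Nat.div_add_mod a 2
    have h5 : ((2*(a/2) + a%2 : ℕ) : ℚ) = (a:ℚ) := by rw [hmod]
    push_cast at h5
    rw [Nat.testBit_zero]
    rcases Nat.mod_two_eq_zero_or_one a with h4 | h4
    · simp only [h4, Nat.cast_zero, add_zero] at h5
      simp only [h4]
      norm_num
      rw [← h5]
      push_cast
      field_simp
      ring
    · simp only [h4, Nat.cast_one] at h5
      simp only [h4]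
      norm_num
      rw [← h5]
      push_cast
      field_simp
      ring

lemma wval_binWord_lt {K a b : ℕ} (hab : a < b) (h : b < 2^K) :
    wval (binWord K a) < wval (binWord K b) := by
  rw [wval_binWord (by omega), wval_binWord h]
  have : (a:ℚ) < (b:ℚ) := by exact_mod_cast hab
  gcongr


/-! ### Section 5: table machinery -/

lemma homeo_mul_apply (f g : Cantor ≃ₜ Cantor) (x : Cantor) : (f * g) x = f (g x) := rfl
lemma homeo_inv_apply (f : Cantor ≃ₜ Cantor) (x : Cantor) : f⁻¹ x = f.symm x := rfl
lemma homeo_one_apply (x : Cantor) : (1 : Cantor ≃ₜ Cantor) x = x := rfl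

lemma wordApp_nil (x : Cantor) : wordApp [] x = x := by
  funext n; rw [wordApp_ge (by simp)]; simp

lemma prefix_of_agree {a b : List Bool} {x : Cantor} (hx : x ∈ cyl a) (hx' : x ∈ cyl b)
    (hl : a.length ≤ b.length) : a <+: b := by
  have : a = b.take a.length := by
    apply List.ext_getElem (by simp [Nat.min_eq_left hl])
    intro i h1 h2
    have e1 := hx i h1
    have e2 := hx' i (by omega)
    simp only [List.get_eq_getElem] at e1 e2
    rw [List.getElem_take, ← e1, ← e2]
  rw [this]
  exact List.take_prefix _ _

lemma isTable_one : IsTable 1 1 (fun _ => []) (fun _ => []) := by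
  refine ⟨fun x => ⟨0, ?_, fun j _ => Subsingleton.elim _ _⟩,
    fun x => ⟨0, ?_, fun j _ => Subsingleton.elim _ _⟩, fun i x => ?_⟩
  · intro i h; simp at h
  · intro i h; simp at h
  · rw [homeo_one_apply]

lemma isTable_inv {s : Cantor ≃ₜ Cantor} {n w z} (h : IsTable s n w z) :
    IsTable s⁻¹ n z w := by
  refine ⟨h.2.1, h.1, fun i x => ?_⟩
  rw [← h.2.2 i x, homeo_inv_apply, Homeomorph.symm_apply_apply]

lemma binWord_injective {K a b : ℕ} (ha : a < 2^K) (hb : b < 2^K)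
    (h : binWord K a = binWord K b) : a = b := by
  have h1 : numOf (wordApp (binWord K a) zeroSeq) K = a :=
    numOf_eq ha (mem_cyl_binWord.1 (wordApp_mem_cyl _ _))
  have h2 : numOf (wordApp (binWord K a) zeroSeq) K = b := by
    rw [h] at h1 ⊢
    exact numOf_eq hb (mem_cyl_binWord.1 (wordApp_mem_cyl _ _))
  omega

lemma cyl_coords_append {u v : List Bool} {y : Cantor} (hy : y ∈ cyl (u ++ v)) :
    ∀ t < v.length, y (u.length + t) = v.getD t false := by
  intro t ht
  have := hy (u.length + t) (by simp; omega)
  simp only [List.get_eq_getElem] at this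
  rw [this, List.getElem_append_right (by omega), List.getD_eq_getElem _ _ (by simpa using ht)]
  congr 1
  omega

lemma isTable_refine {s : Cantor ≃ₜ Cantor} {n w z} (h : IsTable s n w z) {K : ℕ}
    (hK : ∀ i, (w i).length ≤ K) :
    ∃ z' : Fin (2^K) → List Bool, IsTable s (2^K) (fun a => binWord K (a : ℕ)) z' := by
  classical
  obtain ⟨hw, hz, hs⟩ := h
  have hidx0 := fun a : Fin (2^K) => (hw (wordApp (binWord K (a : ℕ)) zeroSeq)).exists
  choose idx hidx using hidx0
  have hpre : ∀ a : Fin (2^K), ∃ e, w (idx a) ++ e = binWord K (a : ℕ) := by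
    intro a
    exact prefix_of_agree (hidx a) (wordApp_mem_cyl _ _) (by simpa using hK (idx a))
  choose e he using hpre
  have hlen : ∀ a : Fin (2^K), (w (idx a)).length + (e a).length = K := by
    intro a
    have := congrArg List.length (he a)
    simpa using this
  have memz : ∀ (a : Fin (2^K)) (x : Cantor),
      s (wordApp (binWord K (a : ℕ)) x) = wordApp (z (idx a) ++ e a) x := by
    intro a x
    rw [← he a, wordApp_append, hs, ← wordApp_append]
  refine ⟨fun a => z (idx a) ++ e a, fun x => by simpa using binWord_partition K x,
    fun y => ?_, memz⟩
  have key : ∀ b c : Fin (2^K), y ∈ cyl (z (idx b) ++ e b) → y ∈ cyl (z (idx c) ++ e c) →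
      b = c := by
    intro b c hb hc
    have hib : y ∈ cyl (z (idx b)) := cyl_append_subset _ _ hb
    have hic : y ∈ cyl (z (idx c)) := cyl_append_subset _ _ hc
    obtain ⟨i0, hi0, hu⟩ := hz y
    have eidx : idx b = idx c := by rw [hu _ hib, hu _ hic]
    have hle : (e b).length = (e c).length := by
      have h1 := hlen b
      have h2 := hlen c
      rw [eidx] at h1
      omega
    have heq : e b = e c := by
      apply List.ext_getElem hle
      intro t h1 h2
      have e1 := cyl_coords_append hb t h1
      have e2 := cyl_coords_append hc t h2
      rw [eidx] at e1
      rw [e1] at e2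
      rw [List.getD_eq_getElem _ _ h1, List.getD_eq_getElem _ _ h2] at e2
      exact e2
    apply Fin.ext
    apply binWord_injective b.2 c.2
    rw [← he b, ← he c, eidx, heq]
  set x := s.symm y with hxdef
  have hsx : s x = y := s.apply_symm_apply y
  have hx : x ∈ cyl (binWord K (numOf x K)) := mem_cyl_binWord_numOf x K
  have hmem : y ∈ cyl (z (idx ⟨numOf x K, numOf_lt x K⟩) ++ e ⟨numOf x K, numOf_lt x K⟩) := by
    have hxa : x = wordApp (binWord K (numOf x K)) (shiftk K x) := by
      have := eq_wordApp_of_mem_cyl hx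
      rwa [binWord_length] at this
    have : y = wordApp (z (idx ⟨numOf x K, numOf_lt x K⟩) ++ e ⟨numOf x K, numOf_lt x K⟩)
        (shiftk K x) := by
      rw [← hsx]
      conv_lhs => rw [hxa]
      exact memz ⟨numOf x K, numOf_lt x K⟩ (shiftk K x)
    rw [this]
    exact wordApp_mem_cyl _ _
  exact ⟨⟨numOf x K, numOf_lt x K⟩, hmem, fun b hb => key b _ hb hmem⟩

lemma isTable_corefine {s : Cantor ≃ₜ Cantor} {n w z} (h : IsTable s n w z) {K : ℕ}
    (hK : ∀ i, (z i).length ≤ K) :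
    ∃ w' : Fin (2^K) → List Bool, IsTable s (2^K) w' (fun a => binWord K (a : ℕ)) := by
  obtain ⟨w', hw'⟩ := isTable_refine (isTable_inv h) hK
  refine ⟨w', ?_⟩
  have := isTable_inv hw'
  rwa [inv_inv] at this

lemma inV_one : InV 1 := ⟨1, _, _, isTable_one⟩

lemma inV_inv {s : Cantor ≃ₜ Cantor} (h : InV s) : InV s⁻¹ := by
  obtain ⟨n, w, z, ht⟩ := h
  exact ⟨n, z, w, isTable_inv ht⟩

lemma inV_mul {f g : Cantor ≃ₜ Cantor} (hf : InV f) (hg : InV g) : InV (f * g) := by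
  classical
  obtain ⟨n, w, z, hfT⟩ := hf
  obtain ⟨m, u, v, hgT⟩ := hg
  set K := max (Finset.univ.sup fun i : Fin n => (w i).length)
    (Finset.univ.sup fun j : Fin m => (v j).length) with hKdef
  obtain ⟨z', hz'⟩ := isTable_refine hfT (K := K)
    (fun i => le_max_iff.2 (Or.inl (Finset.le_sup (f := fun i : Fin n => (w i).length) (Finset.mem_univ i))))
  obtain ⟨u', hu'⟩ := isTable_corefine hgT (K := K)
    (fun j => le_max_iff.2 (Or.inr (Finset.le_sup (f := fun j : Fin m => (v j).length) (Finset.mem_univ j))))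
  refine ⟨2^K, u', z', hu'.1, hz'.2.1, fun a x => ?_⟩
  rw [homeo_mul_apply, hu'.2.2 a x, hz'.2.2 a x]

lemma inT_inV {s : Cantor ≃ₜ Cantor} (h : InT s) : InV s := by
  obtain ⟨n, w, z, ht⟩ := h
  exact ⟨n, w, z, ht.1⟩

lemma inV_of_mem_TGrp {s : Cantor ≃ₜ Cantor} (h : s ∈ TGrp) : InV s := by
  induction h using Subgroup.closure_induction with
  | mem x hx => exact inT_inV hx
  | one => exact inV_one
  | mul x y hx hy ihx ihy => exact inV_mul ihx ihy
  | inv x hx ih => exact inV_inv ih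

/-! ### Section 6: cyclic order preservation -/

lemma cyc_rot {p q r : Cantor} : cyc p q r ↔ cyc q r p := by
  unfold cyc; tauto

lemma cyc_distinct {p q r : Cantor} (h : cyc p q r) : p ≠ q ∧ q ≠ r ∧ r ≠ p := by
  rcases h with ⟨a, b⟩ | ⟨a, b⟩ | ⟨a, b⟩
  · exact ⟨clt_ne a, clt_ne b, fun e => clt_ne (clt_trans a b) e.symm⟩
  · exact ⟨fun e => clt_ne (clt_trans a b) e.symm, clt_ne a, clt_ne b⟩
  · exact ⟨clt_ne b, fun e => clt_ne (clt_trans a b) e.symm, clt_ne a⟩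

lemma cyc_iff_of_flank {p q r : Cantor} (hrp : r ≠ p) (h1 : clt p r ↔ clt q r) :
    cyc p q r ↔ clt p q := by
  constructor
  · rintro (⟨a, b⟩ | ⟨a, b⟩ | ⟨a, b⟩)
    · exact a
    · exact absurd (h1.2 a) (fun h => clt_asymm h b)
    · exact b
  · intro hpq
    rcases clt_trichotomy hrp with h' | h'
    · exact Or.inr (Or.inr ⟨h', hpq⟩)
    · exact Or.inl ⟨hpq, h1.1 h'⟩

def cycN (a b c : ℕ) : Prop := (a < b ∧ b < c) ∨ (b < c ∧ c < a) ∨ (c < a ∧ a < b)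

lemma cycN_rot {n r a b c : ℕ} (ha : a < n) (hb : b < n) (hc : c < n) (h : cycN a b c) :
    cycN ((a + r) % n) ((b + r) % n) ((c + r) % n) := by
  have hn : 0 < n := by omega
  have key : ∀ x, x < n → ((x + r) % n = x + r % n ∧ x + r % n < n) ∨
      ((x + r) % n = x + r % n - n ∧ n ≤ x + r % n ∧ x + r % n < 2 * n) := by
    intro x hx
    have h1 : (x + r) % n = (x + r % n) % n := (Nat.add_mod_mod x r n).symm
    rcases lt_or_ge (x + r % n) n with h' | h'
    · left; rw [h1, Nat.mod_eq_of_lt h']; omega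
    · right
      have hr : r % n < n := Nat.mod_lt _ hn
      rw [h1, Nat.mod_eq_sub_mod h', Nat.mod_eq_of_lt (by omega)]
      omega
  rcases key a ha with ⟨e1, f1⟩ | ⟨e1, f1⟩ <;> rcases key b hb with ⟨e2, f2⟩ | ⟨e2, f2⟩ <;>
    rcases key c hc with ⟨e3, f3⟩ | ⟨e3, f3⟩ <;>
    unfold cycN at h ⊢ <;> rw [e1, e2, e3] <;> omega

/-- cyclic order preservation -/
def Scyc (g : Cantor ≃ₜ Cantor) : Prop := ∀ p q r, cyc p q r → cyc (g p) (g q) (g r)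

lemma scyc_one : Scyc 1 := fun p q r h => h

lemma scyc_mul {f g : Cantor ≃ₜ Cantor} (hf : Scyc f) (hg : Scyc g) : Scyc (f * g) :=
  fun p q r h => hf _ _ _ (hg _ _ _ h)

lemma scyc_inv {g : Cantor ≃ₜ Cantor} (hg : Scyc g) : Scyc g⁻¹ := by
  intro p q r h
  obtain ⟨h1, h2, h3⟩ := cyc_distinct h
  have e1 : g (g⁻¹ p) = p := g.apply_symm_apply p
  have e2 : g (g⁻¹ q) = q := g.apply_symm_apply q
  have e3 : g (g⁻¹ r) = r := g.apply_symm_apply r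
  have d1 : g⁻¹ p ≠ g⁻¹ q := fun e => h1 (by rw [← e1, ← e2, e])
  have d2 : g⁻¹ q ≠ g⁻¹ r := fun e => h2 (by rw [← e2, ← e3, e])
  have d3 : g⁻¹ r ≠ g⁻¹ p := fun e => h3 (by rw [← e3, ← e1, e])
  rcases cyc_total d1 d2 d3 with h' | h'
  · exact h'
  · exfalso
    have := hg _ _ _ h'
    rw [e1, e2, e3] at this
    exact cyc_not_swap h this

lemma scyc_of_inT {s : Cantor ≃ₜ Cantor} (hT : InT s) : Scyc s := by
  classical
  obtain ⟨n, w, z, ⟨hw, hz, hs⟩, hworder, r, hzorder⟩ := hT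
  choose I hmem hun using hw
  have n0 : 0 < n := (I zeroSeq).pos
  have himg : ∀ p, s p = wordApp (z (I p)) (shiftk (w (I p)).length p) := by
    intro p
    conv_lhs => rw [eq_wordApp_of_mem_cyl (hmem p)]
    rw [hs]
  have himgmem : ∀ p, s p ∈ cyl (z (I p)) := fun p => by
    rw [himg p]; exact wordApp_mem_cyl _ _
  -- order between different cylinders
  have keyD : ∀ p q, I p ≠ I q → (clt p q ↔ (I p : ℕ) < (I q : ℕ)) := by
    intro p q hne
    have dir : ∀ p' q', (I p' : ℕ) < (I q' : ℕ) → clt p' q' := by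
      intro p' q' hlt
      have hne' : I p' ≠ I q' := fun e => by rw [e] at hlt; omega
      exact clt_of_cyl (hmem p') (hmem q')
        (incomp_of_partition (fun x => ⟨I x, hmem x, fun j hj => hun x j hj⟩) hne')
        (incomp_of_partition (fun x => ⟨I x, hmem x, fun j hj => hun x j hj⟩) hne'.symm)
        (hworder _ _ (by exact hlt))
    constructor
    · intro hpq
      rcases Nat.lt_or_ge (I p : ℕ) (I q : ℕ) with h' | h'
      · exact h'
      · have : (I q : ℕ) < (I p : ℕ) := by
          rcases Nat.eq_or_lt_of_le h' with h'' | h''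
          · exact absurd (Fin.ext h''.symm) hne
          · exact h''
        exact absurd (dir q p this) (clt_asymm hpq)
    · exact dir p q
  have keyD' : ∀ p q, I p ≠ I q →
      (clt (s p) (s q) ↔ ((I p : ℕ) + r) % n < ((I q : ℕ) + r) % n) := by
    intro p q hne
    have modinj : ∀ i j : Fin n, ((i : ℕ) + r) % n = ((j : ℕ) + r) % n → i = j := by
      intro i j hij
      have : (i : ℕ) % n = (j : ℕ) % n :=
        Nat.ModEq.add_right_cancel' r hij
      rw [Nat.mod_eq_of_lt i.isLt, Nat.mod_eq_of_lt j.isLt] at this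
      exact Fin.ext this
    have dir : ∀ p' q', I p' ≠ I q' → (((I p' : ℕ) + r) % n < ((I q' : ℕ) + r) % n) →
        clt (s p') (s q') := by
      intro p' q' hne' hlt
      exact clt_of_cyl (himgmem p') (himgmem q')
        (incomp_of_partition hz (fun e => hne' e))
        (incomp_of_partition hz (fun e => hne' e.symm))
        (hzorder _ _ hlt)
    constructor
    · intro hpq
      rcases Nat.lt_or_ge (((I p : ℕ) + r) % n) (((I q : ℕ) + r) % n) with h' | h'
      · exact h'
      · rcases Nat.eq_or_lt_of_le h' with h'' | h''
        · exact absurd (modinj _ _ h''.symm) hne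
        · exact absurd (dir q p hne.symm h'') (clt_asymm hpq)
    · exact dir p q hne
  have keyS : ∀ p q, I p = I q → (clt (s p) (s q) ↔ clt p q) := by
    intro p q he
    rw [himg p, himg q, he, clt_wordApp_iff]
    have hp := eq_wordApp_of_mem_cyl (hmem p)
    have hq := eq_wordApp_of_mem_cyl (hmem q)
    constructor
    · intro h
      rw [hp, hq, he]
      exact clt_wordApp_iff.2 h
    · intro h
      rw [hp, hq, he] at h
      exact clt_wordApp_iff.1 h
  -- the three-distinct case
  have main3 : ∀ p q t, I p ≠ I q → I q ≠ I t → I t ≠ I p → cyc p q t →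
      cyc (s p) (s q) (s t) := by
    intro p q t h1 h2 h3 hcyc
    have hnum : cycN (I p : ℕ) (I q : ℕ) (I t : ℕ) := by
      rcases hcyc with ⟨a, b⟩ | ⟨a, b⟩ | ⟨a, b⟩
      · exact Or.inl ⟨(keyD p q h1).1 a, (keyD q t h2).1 b⟩
      · exact Or.inr (Or.inl ⟨(keyD q t h2).1 a, (keyD t p h3).1 b⟩)
      · exact Or.inr (Or.inr ⟨(keyD t p h3).1 a, (keyD p q h1).1 b⟩)
    have := cycN_rot (r := r) (I p).isLt (I q).isLt (I t).isLt hnum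
    rcases this with ⟨a, b⟩ | ⟨a, b⟩ | ⟨a, b⟩
    · exact Or.inl ⟨(keyD' p q h1).2 a, (keyD' q t h2).2 b⟩
    · exact Or.inr (Or.inl ⟨(keyD' q t h2).2 a, (keyD' t p h3).2 b⟩)
    · exact Or.inr (Or.inr ⟨(keyD' t p h3).2 a, (keyD' p q h1).2 b⟩)
  -- two-equal case, normalized so that I p = I q ≠ I t
  have main2 : ∀ p q t, I p = I q → I q ≠ I t → cyc p q t → cyc (s p) (s q) (s t) := by
    intro p q t h1 h2 hcyc
    obtain ⟨d1, d2, d3⟩ := cyc_distinct hcyc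
    have hpt : I p ≠ I t := h1 ▸ h2
    have flank1 : clt p t ↔ clt q t := by
      rw [keyD p t hpt, keyD q t h2, h1]
    have flank2 : clt (s p) (s t) ↔ clt (s q) (s t) := by
      rw [keyD' p t hpt, keyD' q t h2, h1]
    have hst : s t ≠ s p := fun e => d3 (s.injective e)
    have hpq : clt p q := (cyc_iff_of_flank d3 flank1).1 hcyc
    exact (cyc_iff_of_flank hst flank2).2 ((keyS p q h1).2 hpq)
  intro p q t hcyc
  by_cases h1 : I p = I q
  · by_cases h2 : I q = I t
    · rcases hcyc with ⟨a, b⟩ | ⟨a, b⟩ | ⟨a, b⟩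
      · exact Or.inl ⟨(keyS p q h1).2 a, (keyS q t h2).2 b⟩
      · exact Or.inr (Or.inl ⟨(keyS q t h2).2 a, (keyS t p ((h1.trans h2).symm)).2 b⟩)
      · exact Or.inr (Or.inr ⟨(keyS t p ((h1.trans h2).symm)).2 a, (keyS p q h1).2 b⟩)
    · exact main2 p q t h1 h2 hcyc
  · by_cases h2 : I q = I t
    · refine cyc_rot.1 (cyc_rot.1 (main2 q t p h2 (fun e => h1 ?_) (cyc_rot.1 hcyc)))
      rw [h2, e]
    · by_cases h3 : I t = I p
      · exact cyc_rot.1 (main2 t p q h3 h1 (cyc_rot.1 (cyc_rot.1 hcyc)))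
      · exact main3 p q t h1 h2 h3 hcyc

/-! ### Section 7: the stabilizer of `0^∞` in `T` is `F` -/

lemma scyc_of_mem_TGrp {s : Cantor ≃ₜ Cantor} (h : s ∈ TGrp) : Scyc s := by
  induction h using Subgroup.closure_induction with
  | mem x hx => exact scyc_of_inT hx
  | one => exact scyc_one
  | mul x y hx hy ihx ihy => exact scyc_mul ihx ihy
  | inv x hx ih => exact scyc_inv ih

lemma not_clt_zeroSeq (p : Cantor) : ¬ clt p zeroSeq := by
  rintro ⟨n, _, _, h⟩
  exact absurd h (by simp [zeroSeq])

lemma clt_mono_of_scyc {g : Cantor ≃ₜ Cantor} (hg : Scyc g) (h0 : g zeroSeq = zeroSeq)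
    {p q : Cantor} (h : clt p q) : clt (g p) (g q) := by
  by_cases hp : p = zeroSeq
  · subst hp
    rw [h0]
    apply zeroSeq_clt
    intro e
    rw [← h0] at e
    exact clt_ne h (g.injective e).symm
  · have hq : q ≠ zeroSeq := fun e => not_clt_zeroSeq p (e ▸ h)
    have hcyc : cyc zeroSeq p q := Or.inl ⟨zeroSeq_clt hp, h⟩
    have := hg _ _ _ hcyc
    rw [h0] at this
    rcases this with ⟨a, b⟩ | ⟨a, b⟩ | ⟨a, b⟩
    · exact b
    · exact absurd b (not_clt_zeroSeq _)
    · exact absurd a (not_clt_zeroSeq _)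

lemma isTable_reindex {s : Cantor ≃ₜ Cantor} {n w z} (h : IsTable s n w z) (e : Fin n ≃ Fin n) :
    IsTable s n (w ∘ e) (z ∘ e) := by
  obtain ⟨hw, hz, hs⟩ := h
  refine ⟨fun x => ?_, fun x => ?_, fun i x => hs (e i) x⟩
  · obtain ⟨i, hi, hu⟩ := hw x
    refine ⟨e.symm i, ?_, fun j hj => ?_⟩
    · show x ∈ cyl (w (e (e.symm i)))
      rwa [e.apply_symm_apply]
    · have := hu (e j) hj
      rw [← this]
      simp
  · obtain ⟨i, hi, hu⟩ := hz x
    refine ⟨e.symm i, ?_, fun j hj => ?_⟩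
    · show x ∈ cyl (z (e (e.symm i)))
      rwa [e.apply_symm_apply]
    · have := hu (e j) hj
      rw [← this]
      simp

lemma wval_allFalse {w : List Bool} (h : ∀ i < w.length, w.getD i false = false) :
    wval w = 0 := by
  apply Finset.sum_eq_zero
  intro i hi
  rw [h i (Finset.mem_range.1 hi)]
  simp

lemma inF_of_inV_mono {g : Cantor ≃ₜ Cantor} (hV : InV g)
    (hmono : ∀ p q, clt p q → clt (g p) (g q)) : InF g := by
  classical
  obtain ⟨n, w, z, ht⟩ := hV
  have hwinj : Function.Injective (fun i => wval (w i)) := by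
    intro i j hij
    by_contra hne
    exact wval_ne_of_incomp (incomp_of_partition ht.1 hne) (incomp_of_partition ht.1 (Ne.symm hne)) hij
  set σ := Tuple.sort (fun i => wval (w i)) with hσ
  have hmonot : Monotone ((fun i => wval (w i)) ∘ σ) := Tuple.monotone_sort _
  have hstrict : StrictMono ((fun i => wval (w i)) ∘ σ) :=
    hmonot.strictMono_of_injective (hwinj.comp σ.injective)
  have ht' := isTable_reindex ht σ
  have horder : ∀ i j : Fin n, i < j → wval ((w ∘ σ) i) < wval ((w ∘ σ) j) :=
    fun i j hij => hstrict hij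
  refine ⟨n, w ∘ σ, z ∘ σ, ht', horder, fun i j hij => ?_⟩
  have hne : σ i ≠ σ j := fun e => absurd (σ.injective e) (ne_of_lt hij)
  have incw1 := incomp_of_partition ht.1 hne
  have incw2 := incomp_of_partition ht.1 hne.symm
  have incz1 := incomp_of_partition ht.2.1 hne
  have incz2 := incomp_of_partition ht.2.1 hne.symm
  set p := wordApp ((w ∘ σ) i) zeroSeq
  set q := wordApp ((w ∘ σ) j) zeroSeq
  have hpq : clt p q :=
    clt_of_cyl (wordApp_mem_cyl _ _) (wordApp_mem_cyl _ _) incw1 incw2 (horder i j hij)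
  have himg : clt (g p) (g q) := hmono p q hpq
  have hgp : g p = wordApp ((z ∘ σ) i) zeroSeq := ht.2.2 (σ i) zeroSeq
  have hgq : g q = wordApp ((z ∘ σ) j) zeroSeq := ht.2.2 (σ j) zeroSeq
  rcases lt_trichotomy (wval ((z ∘ σ) i)) (wval ((z ∘ σ) j)) with h' | h' | h'
  · exact h'
  · exact absurd h' (wval_ne_of_incomp incz1 incz2)
  · exfalso
    have : clt (g q) (g p) := by
      rw [hgp, hgq]
      exact clt_of_cyl (wordApp_mem_cyl _ _) (wordApp_mem_cyl _ _) incz2 incz1 h'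
    exact clt_asymm himg this

lemma allFalse_of_zeroSeq_mem {w : List Bool} (h : zeroSeq ∈ cyl w) :
    ∀ i < w.length, w.getD i false = false := zeroSeq_mem_cyl_iff.1 h

lemma fixes_zero_of_inF {f : Cantor ≃ₜ Cantor} (h : InF f) : f zeroSeq = zeroSeq := by
  obtain ⟨n, w, z, ⟨hw, hz, hs⟩, hworder, hzorder⟩ := h
  obtain ⟨i0, hi0, _⟩ := hw zeroSeq
  obtain ⟨j0, hj0, _⟩ := hz zeroSeq
  have hwf := allFalse_of_zeroSeq_mem hi0
  have hzf := allFalse_of_zeroSeq_mem hj0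
  have hi00 : i0 = (⟨0, i0.pos⟩ : Fin n) := by
    by_contra hne
    have h0i : (⟨0, i0.pos⟩ : Fin n) < i0 := by
      rcases Nat.eq_or_lt_of_le (Nat.zero_le (i0 : ℕ)) with h' | h'
      · exact absurd (Fin.ext h'.symm) hne
      · exact h'
    have := hworder _ _ h0i
    rw [wval_allFalse hwf] at this
    exact absurd this (not_lt.2 (wval_nonneg _))
  have hj00 : j0 = (⟨0, j0.pos⟩ : Fin n) := by
    by_contra hne
    have h0j : (⟨0, j0.pos⟩ : Fin n) < j0 := by
      rcases Nat.eq_or_lt_of_le (Nat.zero_le (j0 : ℕ)) with h' | h'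
      · exact absurd (Fin.ext h'.symm) hne
      · exact h'
    have := hzorder _ _ h0j
    rw [wval_allFalse hzf] at this
    exact absurd this (not_lt.2 (wval_nonneg _))
  have e1 : zeroSeq = wordApp (w i0) zeroSeq := (wordApp_allFalse_zeroSeq hwf).symm
  have e2 : f zeroSeq = wordApp (z i0) zeroSeq := by
    conv_lhs => rw [e1]
    exact hs i0 zeroSeq
  rw [e2]
  apply wordApp_allFalse_zeroSeq
  have : i0 = j0 := by rw [hi00, hj00]
  rw [this]
  exact hzf

lemma fixes_zero_of_mem_FGrp {f : Cantor ≃ₜ Cantor} (h : f ∈ FGrp) :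
    f zeroSeq = zeroSeq := by
  induction h using Subgroup.closure_induction with
  | mem x hx => exact fixes_zero_of_inF hx
  | one => rfl
  | mul x y hx hy ihx ihy => rw [homeo_mul_apply, ihy, ihx]
  | inv x hx ih =>
    rw [homeo_inv_apply]
    conv_lhs => rw [← ih]
    exact x.symm_apply_apply zeroSeq

/-- The stabilizer theorem: an element of `T` fixing `0^∞` lies in `F`. -/
theorem mem_FGrp_of_fixes {g : Cantor ≃ₜ Cantor} (hg : g ∈ TGrp)
    (h0 : g zeroSeq = zeroSeq) : g ∈ FGrp :=
  Subgroup.subset_closure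
    (inF_of_inV_mono (inV_of_mem_TGrp hg)
      (fun _ _ h => clt_mono_of_scyc (scyc_of_mem_TGrp hg) h0 h))

/-! ### Section 8: the truncation-shift property -/

def Ptrunc (g : Cantor ≃ₜ Cantor) : Prop :=
  ∃ k : ℕ, ∀ x : Cantor, ∃ a b : ℕ, a ≤ k ∧ b ≤ k ∧
    ∀ j, k ≤ j → g (trunc x (j + a)) = trunc (g x) (j + b)

lemma ptrunc_one : Ptrunc 1 :=
  ⟨0, fun x => ⟨0, 0, le_refl _, le_refl _, fun j _ => by rw [homeo_one_apply, homeo_one_apply]⟩⟩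

lemma ptrunc_mul {g h : Cantor ≃ₜ Cantor} (hg : Ptrunc g) (hh : Ptrunc h) : Ptrunc (g * h) := by
  obtain ⟨kg, Hg⟩ := hg
  obtain ⟨kh, Hh⟩ := hh
  refine ⟨kg + kh, fun x => ?_⟩
  obtain ⟨ah, bh, hah, hbh, Hhx⟩ := Hh x
  obtain ⟨ag, bg, hag, hbg, Hgx⟩ := Hg (h x)
  refine ⟨ag + ah, bg + bh, by omega, by omega, fun j hj => ?_⟩
  rw [homeo_mul_apply, homeo_mul_apply]
  rw [show j + (ag + ah) = (j + ag) + ah by ring, Hhx _ (by omega),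
    show j + ag + bh = (j + bh) + ag by ring, Hgx _ (by omega)]
  congr 1
  ring

lemma ptrunc_inv {g : Cantor ≃ₜ Cantor} (hg : Ptrunc g) : Ptrunc g⁻¹ := by
  obtain ⟨k, Hg⟩ := hg
  refine ⟨k, fun y => ?_⟩
  obtain ⟨a, b, ha, hb, H⟩ := Hg (g⁻¹ y)
  refine ⟨b, a, hb, ha, fun j hj => ?_⟩
  have := H j hj
  rw [show g (g⁻¹ y) = y from g.apply_symm_apply y] at this
  rw [← this, homeo_inv_apply, g.symm_apply_apply]

lemma ptrunc_of_inV {s : Cantor ≃ₜ Cantor} (hV : InV s) : Ptrunc s := by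
  classical
  obtain ⟨n, w, z, hw, hz, hs⟩ := hV
  refine ⟨Finset.univ.sup fun i => max (w i).length (z i).length, fun x => ?_⟩
  obtain ⟨i, hi, _⟩ := hw x
  have hsup := Finset.le_sup (f := fun i => max (w i).length (z i).length) (Finset.mem_univ i)
  have hb1 : (w i).length ≤ Finset.univ.sup fun i => max (w i).length (z i).length :=
    le_trans (le_max_left _ _) hsup
  have hb2 : (z i).length ≤ Finset.univ.sup fun i => max (w i).length (z i).length :=
    le_trans (le_max_right _ _) hsup
  refine ⟨(w i).length, (z i).length, hb1, hb2, fun j hj => ?_⟩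
  have e1 : trunc x (j + (w i).length) = wordApp (w i) (trunc (shiftk (w i).length x) j) := by
    have := trunc_eq_wordApp hi (j := j + (w i).length) (by omega)
    rwa [Nat.add_sub_cancel] at this
  rw [e1, hs, wordApp_trunc]
  congr 1
  conv_rhs => rw [eq_wordApp_of_mem_cyl hi, hs]

lemma evZero_map {g : Cantor ≃ₜ Cantor} (hg : Ptrunc g) {y : Cantor} (hy : EvZero y) :
    EvZero (g y) := by
  obtain ⟨k, H⟩ := hg
  obtain ⟨a, b, _, _, Hy⟩ := H y
  obtain ⟨k', hk'⟩ := trunc_eq_self_of_evZero hy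
  set j := max k k'
  have hj2 : k' ≤ j + a := by
    have := le_max_right k k'
    omega
  have e : g y = trunc (g y) (j + b) := by
    rw [← Hy j (le_max_left _ _), hk' (j + a) hj2]
  rw [e]
  exact evZero_trunc _ _

lemma ptrunc_of_mem_TGrp {s : Cantor ≃ₜ Cantor} (h : s ∈ TGrp) : Ptrunc s := by
  induction h using Subgroup.closure_induction with
  | mem x hx => exact ptrunc_of_inV (inT_inV hx)
  | one => exact ptrunc_one
  | mul x y hx hy ihx ihy => exact ptrunc_mul ihx ihy
  | inv x hx ih => exact ptrunc_inv ih

/-! ### Section 9: dyadic rotations and the orbit of `0^∞` -/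

lemma numOf_congr {x y : Cantor} {K : ℕ} (h : ∀ i < K, x i = y i) : numOf x K = numOf y K := by
  induction K with
  | zero => rfl
  | succ K ih =>
    show 2 * numOf x K + (x K).toNat = 2 * numOf y K + (y K).toNat
    rw [ih (fun i hi => h i (by omega)), h K (by omega)]

lemma continuous_of_depends (f : Cantor → Bool) (K : ℕ)
    (h : ∀ x y : Cantor, (∀ i < K, x i = y i) → f x = f y) : Continuous f := by
  classical
  let g : (Fin K → Bool) → Bool := fun v => f (fun n => if hn : n < K then v ⟨n, hn⟩ else false)
  have hfg : f = g ∘ (fun x (i : Fin K) => x (i : ℕ)) := by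
    funext x
    apply h
    intro i hi
    simp [g, hi]
  rw [hfg]
  exact Continuous.comp continuous_of_discreteTopology
    (continuous_pi fun i => continuous_apply (i : ℕ))

lemma mod_rot_cancel {N m a : ℕ} (hN : 0 < N) (hm : m < N) :
    ((m + a) % N + (N - a % N)) % N = m := by
  rw [Nat.mod_add_mod]
  have h1 : a % N < N := Nat.mod_lt _ hN
  have h2 := Nat.div_add_mod a N
  have h3 : m + a + (N - a % N) = m + N * (a / N + 1) := by
    rw [Nat.mul_add, Nat.mul_one]
    omega
  rw [h3, Nat.add_mul_mod_self_left, Nat.mod_eq_of_lt hm]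

lemma mod_rot_cancel' {N m a : ℕ} (hN : 0 < N) (hm : m < N) :
    ((m + (N - a % N)) % N + a) % N = m := by
  rw [Nat.mod_add_mod]
  have h1 : a % N < N := Nat.mod_lt _ hN
  have h2 := Nat.div_add_mod a N
  have h3 : m + (N - a % N) + a = m + N * (a / N + 1) := by
    rw [Nat.mul_add, Nat.mul_one]
    omega
  rw [h3, Nat.add_mul_mod_self_left, Nat.mod_eq_of_lt hm]

lemma shiftk_wordApp {u : List Bool} {t : Cantor} {K : ℕ} (h : u.length = K) :
    shiftk K (wordApp u t) = t := by
  funext n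
  rw [shiftk, wordApp_ge (by omega)]
  congr 1
  omega

lemma eq_wordApp_binWord (x : Cantor) (K : ℕ) :
    x = wordApp (binWord K (numOf x K)) (shiftk K x) := by
  have := eq_wordApp_of_mem_cyl (mem_cyl_binWord_numOf x K)
  rwa [binWord_length] at this

/-- rotation map by `a/2^K` -/
def rotFun (K a : ℕ) (x : Cantor) : Cantor :=
  wordApp (binWord K ((numOf x K + a) % 2^K)) (shiftk K x)

lemma rotFun_wordApp {K a m : ℕ} (hm : m < 2^K) (t : Cantor) :
    rotFun K a (wordApp (binWord K m) t) = wordApp (binWord K ((m + a) % 2^K)) t := by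
  rw [rotFun, numOf_eq hm (mem_cyl_binWord.1 (wordApp_mem_cyl _ _)),
    shiftk_wordApp (binWord_length _ _)]

lemma rotFun_continuous (K a : ℕ) : Continuous (rotFun K a) := by
  apply continuous_pi
  intro n
  by_cases hn : n < K
  · apply continuous_of_depends _ K
    intro x y hxy
    show rotFun K a x n = rotFun K a y n
    rw [rotFun, rotFun, numOf_congr hxy, wordApp_lt (by simpa using hn),
      wordApp_lt (by simpa using hn)]
  · have : (fun x => rotFun K a x n) = fun x => x n := by
      funext x
      rw [rotFun, wordApp_ge (by simpa using not_lt.1 hn), binWord_length, shiftk]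
      congr 1
      omega
    rw [this]
    exact continuous_apply n

lemma rotFun_rotFun (K a : ℕ) (x : Cantor) :
    rotFun K (2^K - a % 2^K) (rotFun K a x) = x := by
  have hN : 0 < 2^K := Nat.pow_pos (by norm_num)
  have hm : numOf x K < 2^K := numOf_lt x K
  conv_lhs => rw [show rotFun K a x
    = wordApp (binWord K ((numOf x K + a) % 2^K)) (shiftk K x) from rfl]
  rw [rotFun_wordApp (Nat.mod_lt _ hN), mod_rot_cancel hN hm]
  exact (eq_wordApp_binWord x K).symm

def rotHomeo (K a : ℕ) : Cantor ≃ₜ Cantor where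
  toFun := rotFun K a
  invFun := rotFun K (2^K - a % 2^K)
  left_inv := fun x => rotFun_rotFun K a x
  right_inv := fun x => by
    have hN : 0 < 2^K := Nat.pow_pos (by norm_num)
    conv_lhs => rw [show rotFun K (2^K - a % 2^K) x
      = wordApp (binWord K ((numOf x K + (2^K - a % 2^K)) % 2^K)) (shiftk K x) from rfl]
    rw [rotFun_wordApp (Nat.mod_lt _ hN), mod_rot_cancel' hN (numOf_lt x K)]
    exact (eq_wordApp_binWord x K).symm
  continuous_toFun := rotFun_continuous K a
  continuous_invFun := rotFun_continuous K _

lemma modrot_inj {N : ℕ} (hN : 0 < N) {a i j : ℕ} (hi : i < N) (hj : j < N)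
    (h : (i + a) % N = (j + a) % N) : i = j := by
  have : i % N = j % N := Nat.ModEq.add_right_cancel' a h
  rwa [Nat.mod_eq_of_lt hi, Nat.mod_eq_of_lt hj] at this

lemma inT_rotHomeo {K a : ℕ} (ha : a < 2^K) : InT (rotHomeo K a) := by
  have hN : 0 < 2^K := Nat.pow_pos (by norm_num)
  refine ⟨2^K, fun i => binWord K (i : ℕ), fun i => binWord K (((i : ℕ) + a) % 2^K),
    ⟨fun x => by simpa using binWord_partition K x, fun x => ?_, fun i x => ?_⟩,
    fun i j hij => wval_binWord_lt hij j.isLt, ⟨a, fun i j hij => ?_⟩⟩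
  · -- range partition
    obtain ⟨b, hb, hbu⟩ := binWord_partition K x
    refine ⟨⟨((b : ℕ) + (2^K - a % 2^K)) % 2^K, Nat.mod_lt _ hN⟩, ?_, ?_⟩
    · show x ∈ cyl (binWord K ((((b : ℕ) + (2^K - a % 2^K)) % 2^K + a) % 2^K))
      rwa [mod_rot_cancel' hN b.isLt]
    · intro c hc
      have hc' : x ∈ cyl (binWord K (((c : ℕ) + a) % 2^K)) := hc
      have : (⟨((c : ℕ) + a) % 2^K, Nat.mod_lt _ hN⟩ : Fin (2^K)) = b :=
        hbu _ hc'
      have hcb : ((c : ℕ) + a) % 2^K = (b : ℕ) := congrArg Fin.val this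
      apply Fin.ext
      show (c : ℕ) = ((b : ℕ) + (2^K - a % 2^K)) % 2^K
      rw [← hcb, mod_rot_cancel hN c.isLt]
  · exact rotFun_wordApp i.isLt x
  · exact wval_binWord_lt hij (Nat.mod_lt _ hN)

lemma numOf_zeroSeq (K : ℕ) : numOf zeroSeq K = 0 := by
  induction K with
  | zero => rfl
  | succ K ih => show 2 * numOf zeroSeq K + (zeroSeq K).toNat = 0; rw [ih]; rfl

lemma rotHomeo_zeroSeq {K a : ℕ} (ha : a < 2^K) :
    rotHomeo K a zeroSeq = wordApp (binWord K a) zeroSeq := by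
  have h0 : numOf zeroSeq K = 0 := numOf_zeroSeq K
  show rotFun K a zeroSeq = wordApp (binWord K a) zeroSeq
  rw [rotFun, h0, Nat.zero_add, Nat.mod_eq_of_lt ha]
  rfl

lemma evZero_eq_wordApp {y : Cantor} (hy : EvZero y) :
    ∃ K a, a < 2^K ∧ y = wordApp (binWord K a) zeroSeq := by
  obtain ⟨K, hK⟩ := hy
  refine ⟨K, numOf y K, numOf_lt y K, ?_⟩
  funext n
  by_cases hn : n < K
  · have := mem_cyl_binWord_numOf y K
    rw [wordApp_lt (by simpa using hn)]
    exact this n (by simpa using hn)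
  · rw [wordApp_ge (by simpa using not_lt.1 hn), binWord_length]
    exact hK n (by omega)

lemma orbit_surj {y : Cantor} (hy : EvZero y) :
    ∃ g : Cantor ≃ₜ Cantor, g ∈ TGrp ∧ g zeroSeq = y := by
  obtain ⟨K, a, ha, hrep⟩ := evZero_eq_wordApp hy
  exact ⟨rotHomeo K a, Subgroup.subset_closure (inT_rotHomeo ha),
    by rw [rotHomeo_zeroSeq ha, hrep]⟩

/-! ### Section 10: the equivariant map to the coset space -/

open Classical in
noncomputable def sect (y : Cantor) : TGrp :=
  if h : EvZero y then ⟨(orbit_surj h).choose, (orbit_surj h).choose_spec.1⟩ else 1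

open Classical in
lemma sect_spec {y : Cantor} (hy : EvZero y) :
    ((sect y : TGrp) : Cantor ≃ₜ Cantor) zeroSeq = y := by
  rw [sect, dif_pos hy]
  exact (orbit_surj hy).choose_spec.2

noncomputable def nu (y : Cantor) : TGrp ⧸ FinT := QuotientGroup.mk (sect y)

lemma nu_equivariant (g : TGrp) {y : Cantor} (hy : EvZero y) :
    g • nu y = nu ((g : Cantor ≃ₜ Cantor) y) := by
  have hgy : EvZero ((g : Cantor ≃ₜ Cantor) y) := evZero_map (ptrunc_of_mem_TGrp g.2) hy
  show QuotientGroup.mk (g * sect y) = QuotientGroup.mk (sect ((g : Cantor ≃ₜ Cantor) y))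
  rw [QuotientGroup.eq]
  rw [show FinT = FGrp.subgroupOf TGrp from rfl, Subgroup.mem_subgroupOf]
  apply mem_FGrp_of_fixes (((g * sect y)⁻¹ * sect ((g : Cantor ≃ₜ Cantor) y)).2)
  have e1 : (((g * sect y)⁻¹ * sect ((g : Cantor ≃ₜ Cantor) y) : TGrp) : Cantor ≃ₜ Cantor)
      = ((g : Cantor ≃ₜ Cantor) * (sect y : Cantor ≃ₜ Cantor))⁻¹
        * (sect ((g : Cantor ≃ₜ Cantor) y) : Cantor ≃ₜ Cantor) := by
    push_cast
    rfl
  rw [e1, homeo_mul_apply, sect_spec hgy, homeo_inv_apply]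
  have e2 : ((g : Cantor ≃ₜ Cantor) * (sect y : Cantor ≃ₜ Cantor)) zeroSeq
      = (g : Cantor ≃ₜ Cantor) y := by
    rw [homeo_mul_apply, sect_spec hy]
  rw [← e2, Homeomorph.symm_apply_apply]

/-! ### Section 11: the approximately invariant measures -/

open Classical in
noncomputable def muQ (N : ℕ) (x : Cantor) (c : TGrp ⧸ FinT) : ℝ :=
  ((max 1 N : ℕ) : ℝ)⁻¹ *
    ((Finset.Icc 1 (max 1 N)).filter fun j => nu (trunc x j) = c).card

lemma muQ_nonneg (N : ℕ) (x : Cantor) (c : TGrp ⧸ FinT) : 0 ≤ muQ N x c := by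
  rw [muQ]
  positivity

lemma trunc_congr {x y : Cantor} {j : ℕ} (h : ∀ i < j, x i = y i) : trunc x j = trunc y j := by
  funext n
  by_cases hn : n < j
  · rw [trunc, trunc, if_pos hn, if_pos hn, h n hn]
  · rw [trunc, trunc, if_neg hn, if_neg hn]

lemma continuous_of_depends' {α : Type*} [TopologicalSpace α] (f : Cantor → α) (K : ℕ)
    (h : ∀ x y : Cantor, (∀ i < K, x i = y i) → f x = f y) : Continuous f := by
  classical
  let g : (Fin K → Bool) → α := fun v => f (fun n => if hn : n < K then v ⟨n, hn⟩ else false)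
  have hfg : f = g ∘ (fun x (i : Fin K) => x (i : ℕ)) := by
    funext x
    apply h
    intro i hi
    simp [g, hi]
  rw [hfg]
  exact Continuous.comp continuous_of_discreteTopology
    (continuous_pi fun i => continuous_apply (i : ℕ))

open Classical in
lemma muQ_tsum (N : ℕ) (x : Cantor) : ∑' c : TGrp ⧸ FinT, muQ N x c = 1 := by
  set M := max 1 N with hMdef
  have hM1 : 1 ≤ M := le_max_left _ _
  set F := (Finset.Icc 1 M).image (fun j => nu (trunc x j)) with hF
  have hsupp : ∀ c ∉ F, muQ N x c = 0 := by
    intro c hc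
    rw [muQ]
    have : ((Finset.Icc 1 M).filter fun j => nu (trunc x j) = c) = ∅ := by
      rw [Finset.filter_eq_empty_iff]
      intro j hj hnu
      exact hc (Finset.mem_image.2 ⟨j, hj, hnu⟩)
    rw [← hMdef, this]
    simp
  rw [tsum_eq_sum hsupp]
  have hcount : ∑ c ∈ F, ((Finset.Icc 1 M).filter fun j => nu (trunc x j) = c).card
      = (Finset.Icc 1 M).card :=
    (Finset.card_eq_sum_card_fiberwise (fun j hj => Finset.mem_image_of_mem _ hj)).symm
  have hcast : ∑ c ∈ F, (((Finset.Icc 1 M).filter fun j => nu (trunc x j) = c).card : ℝ)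
      = (M : ℝ) := by
    rw [← Nat.cast_sum, hcount, Nat.card_Icc]
    norm_num
  calc ∑ c ∈ F, muQ N x c
      = ((M : ℕ) : ℝ)⁻¹ * ∑ c ∈ F,
        (((Finset.Icc 1 M).filter fun j => nu (trunc x j) = c).card : ℝ) := by
        rw [Finset.mul_sum]
        apply Finset.sum_congr rfl
        intro c _
        rw [muQ]
    _ = 1 := by
        rw [hcast]
        apply inv_mul_cancel₀
        exact_mod_cast Nat.one_le_iff_ne_zero.1 hM1

open Classical in
lemma muQ_continuous (N : ℕ) (c : TGrp ⧸ FinT) : Continuous fun x => muQ N x c := by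
  set M := max 1 N with hMdef
  have : (fun x => muQ N x c) = fun x => ((M : ℕ) : ℝ)⁻¹ *
      ∑ j ∈ Finset.Icc 1 M, if nu (trunc x j) = c then (1:ℝ) else 0 := by
    funext x
    rw [muQ, ← hMdef]
    congr 1
    rw [Finset.card_filter]
    push_cast
    rfl
  rw [this]
  apply Continuous.mul continuous_const
  apply continuous_finset_sum
  intro j _
  apply continuous_of_depends' _ j
  intro x y hxy
  rw [trunc_congr hxy]

open Classical in
lemma muQ_bound (g : TGrp) (k0 : ℕ)
    (H : ∀ x : Cantor, ∃ a b : ℕ, a ≤ k0 ∧ b ≤ k0 ∧ ∀ j, k0 ≤ j →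
      (g : Cantor ≃ₜ Cantor) (trunc x (j + a)) = trunc ((g : Cantor ≃ₜ Cantor) x) (j + b))
    (N : ℕ) (x : Cantor) :
    ∑' c : TGrp ⧸ FinT, |muQ N x (g⁻¹ • c) - muQ N ((g : Cantor ≃ₜ Cantor) x) c|
      ≤ (6 * k0 + 4) / ((max 1 N : ℕ) : ℝ) := by
  set M := max 1 N with hMdef
  have hM1 : 1 ≤ M := le_max_left _ _
  have hMR : (0:ℝ) < ((M:ℕ):ℝ) := by exact_mod_cast hM1
  obtain ⟨a, b, ha, hb, Hx⟩ := H x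
  set νA : ℕ → TGrp ⧸ FinT := fun j => g • nu (trunc x j) with hνA
  set νB : ℕ → TGrp ⧸ FinT := fun j => nu (trunc ((g : Cantor ≃ₜ Cantor) x) j) with hνB
  set QJ : ℕ → Prop := fun j => k0 + a + 1 ≤ j ∧ j + b ≤ M + a with hQJ
  set QJ' : ℕ → Prop := fun j => k0 + b + 1 ≤ j ∧ j + a ≤ M + b with hQJ'
  have hmuA : ∀ c, muQ N x (g⁻¹ • c)
      = ((M:ℕ):ℝ)⁻¹ * ((Finset.Icc 1 M).filter fun j => νA j = c).card := by
    intro c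
    have hfe : Finset.filter (fun j => nu (trunc x j) = g⁻¹ • c) (Finset.Icc 1 M)
        = Finset.filter (fun j => νA j = c) (Finset.Icc 1 M) :=
      Finset.filter_congr (fun j _ => by rw [hνA]; exact eq_inv_smul_iff)
    rw [muQ, ← hMdef, hfe]
  have hmuB : ∀ c, muQ N ((g : Cantor ≃ₜ Cantor) x) c
      = ((M:ℕ):ℝ)⁻¹ * ((Finset.Icc 1 M).filter fun j => νB j = c).card := by
    intro c
    rw [muQ, ← hMdef, hνB]
  have key : ∀ j, k0 + a + 1 ≤ j → νB (j - a + b) = νA j := by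
    intro j hj
    have h2 := Hx (j - a) (by omega)
    rw [show j - a + a = j by omega] at h2
    rw [hνB, hνA]
    show nu (trunc ((g : Cantor ≃ₜ Cantor) x) (j - a + b)) = g • nu (trunc x j)
    rw [nu_equivariant g (evZero_trunc x j), ← h2]
  -- the bijection between the main parts
  have hbij : ∀ c, ((Finset.Icc 1 M).filter fun j => νA j = c ∧ QJ j).card
      = ((Finset.Icc 1 M).filter fun j => νB j = c ∧ QJ' j).card := by
    intro c
    apply Finset.card_bij (fun j _ => j - a + b)
    · intro j hj
      rw [Finset.mem_filter, Finset.mem_Icc] at hj ⊢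
      obtain ⟨⟨hj1, hj2⟩, hjc, hjq1, hjq2⟩ := hj
      refine ⟨⟨by omega, by omega⟩, ?_, by omega, by omega⟩
      rw [key j hjq1]
      exact hjc
    · intro j1 h1 j2 h2 heq
      rw [Finset.mem_filter] at h1 h2
      obtain ⟨-, -, hq1, -⟩ := h1
      obtain ⟨-, -, hq2, -⟩ := h2
      omega
    · intro j' hj'
      rw [Finset.mem_filter, Finset.mem_Icc] at hj'
      obtain ⟨⟨h1, h2⟩, hc, hq1, hq2⟩ := hj'
      refine ⟨j' - b + a, ?_, by omega⟩
      rw [Finset.mem_filter, Finset.mem_Icc]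
      have hkey := key (j' - b + a) (by omega)
      rw [show j' - b + a - a + b = j' by omega] at hkey
      exact ⟨⟨by omega, by omega⟩, by rw [← hkey]; exact hc, by omega, by omega⟩
  -- decompositions
  have hsplitA : ∀ c, ((Finset.Icc 1 M).filter fun j => νA j = c).card
      = ((Finset.Icc 1 M).filter fun j => νA j = c ∧ QJ j).card
        + ((Finset.Icc 1 M).filter fun j => νA j = c ∧ ¬ QJ j).card := by
    intro c
    rw [← Finset.filter_filter (fun j => νA j = c) QJ,
      ← Finset.filter_filter (fun j => νA j = c) (fun j => ¬ QJ j)]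
    exact (Finset.card_filter_add_card_filter_not (p := QJ)).symm
  have hsplitB : ∀ c, ((Finset.Icc 1 M).filter fun j => νB j = c).card
      = ((Finset.Icc 1 M).filter fun j => νB j = c ∧ QJ' j).card
        + ((Finset.Icc 1 M).filter fun j => νB j = c ∧ ¬ QJ' j).card := by
    intro c
    rw [← Finset.filter_filter (fun j => νB j = c) QJ',
      ← Finset.filter_filter (fun j => νB j = c) (fun j => ¬ QJ' j)]
    exact (Finset.card_filter_add_card_filter_not (p := QJ')).symm
  -- tail bounds
  have htailA : ((Finset.Icc 1 M).filter fun j => ¬ QJ j).card ≤ 3 * k0 + 2 := by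
    have hsub : (Finset.Icc 1 M).filter (fun j => ¬ QJ j)
        ⊆ Finset.Icc 1 (k0 + a) ∪ Finset.Icc (M + a + 1 - b) M := by
      intro j hj
      rw [Finset.mem_filter, Finset.mem_Icc, hQJ] at hj
      rw [Finset.mem_union, Finset.mem_Icc, Finset.mem_Icc]
      omega
    calc ((Finset.Icc 1 M).filter fun j => ¬ QJ j).card
        ≤ (Finset.Icc 1 (k0 + a) ∪ Finset.Icc (M + a + 1 - b) M).card :=
          Finset.card_le_card hsub
      _ ≤ (Finset.Icc 1 (k0 + a)).card + (Finset.Icc (M + a + 1 - b) M).card :=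
          Finset.card_union_le _ _
      _ ≤ 3 * k0 + 2 := by
          rw [Nat.card_Icc, Nat.card_Icc]
          omega
  have htailB : ((Finset.Icc 1 M).filter fun j => ¬ QJ' j).card ≤ 3 * k0 + 2 := by
    have hsub : (Finset.Icc 1 M).filter (fun j => ¬ QJ' j)
        ⊆ Finset.Icc 1 (k0 + b) ∪ Finset.Icc (M + b + 1 - a) M := by
      intro j hj
      rw [Finset.mem_filter, Finset.mem_Icc, hQJ'] at hj
      rw [Finset.mem_union, Finset.mem_Icc, Finset.mem_Icc]
      omega
    calc ((Finset.Icc 1 M).filter fun j => ¬ QJ' j).card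
        ≤ (Finset.Icc 1 (k0 + b) ∪ Finset.Icc (M + b + 1 - a) M).card :=
          Finset.card_le_card hsub
      _ ≤ (Finset.Icc 1 (k0 + b)).card + (Finset.Icc (M + b + 1 - a) M).card :=
          Finset.card_union_le _ _
      _ ≤ 3 * k0 + 2 := by
          rw [Nat.card_Icc, Nat.card_Icc]
          omega
  -- support
  set F := ((Finset.Icc 1 M).image νA) ∪ ((Finset.Icc 1 M).image νB) with hF
  have hemptyA : ∀ c ∉ F, ((Finset.Icc 1 M).filter fun j => νA j = c) = ∅ := by
    intro c hc
    rw [Finset.filter_eq_empty_iff]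
    intro j hj hnu
    exact hc (Finset.mem_union.2 (Or.inl (Finset.mem_image.2 ⟨j, hj, hnu⟩)))
  have hemptyB : ∀ c ∉ F, ((Finset.Icc 1 M).filter fun j => νB j = c) = ∅ := by
    intro c hc
    rw [Finset.filter_eq_empty_iff]
    intro j hj hnu
    exact hc (Finset.mem_union.2 (Or.inr (Finset.mem_image.2 ⟨j, hj, hnu⟩)))
  have hsupp : ∀ c ∉ F,
      |muQ N x (g⁻¹ • c) - muQ N ((g : Cantor ≃ₜ Cantor) x) c| = 0 := by
    intro c hc
    rw [hmuA, hmuB, hemptyA c hc, hemptyB c hc]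
    simp
  rw [tsum_eq_sum hsupp]
  -- fiberwise sums of the tails
  have hfibA : ∑ c ∈ F, ((Finset.Icc 1 M).filter fun j => νA j = c ∧ ¬ QJ j).card
      = ((Finset.Icc 1 M).filter fun j => ¬ QJ j).card := by
    have he : ∀ c, ((Finset.Icc 1 M).filter fun j => νA j = c ∧ ¬ QJ j)
        = (((Finset.Icc 1 M).filter fun j => ¬ QJ j).filter fun j => νA j = c) := by
      intro c
      rw [Finset.filter_filter]
      apply Finset.filter_congr
      intro j _
      tauto
    rw [Finset.sum_congr rfl (fun c _ => by rw [he c])]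
    exact (Finset.card_eq_sum_card_fiberwise (fun j hj =>
      Finset.mem_union.2 (Or.inl (Finset.mem_image.2
        ⟨j, Finset.mem_of_mem_filter j hj, rfl⟩)))).symm
  have hfibB : ∑ c ∈ F, ((Finset.Icc 1 M).filter fun j => νB j = c ∧ ¬ QJ' j).card
      = ((Finset.Icc 1 M).filter fun j => ¬ QJ' j).card := by
    have he : ∀ c, ((Finset.Icc 1 M).filter fun j => νB j = c ∧ ¬ QJ' j)
        = (((Finset.Icc 1 M).filter fun j => ¬ QJ' j).filter fun j => νB j = c) := by
      intro c
      rw [Finset.filter_filter]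
      apply Finset.filter_congr
      intro j _
      tauto
    rw [Finset.sum_congr rfl (fun c _ => by rw [he c])]
    exact (Finset.card_eq_sum_card_fiberwise (fun j hj =>
      Finset.mem_union.2 (Or.inr (Finset.mem_image.2
        ⟨j, Finset.mem_of_mem_filter j hj, rfl⟩)))).symm
  -- per-c bound
  have hperc : ∀ c ∈ F, |muQ N x (g⁻¹ • c) - muQ N ((g : Cantor ≃ₜ Cantor) x) c|
      ≤ ((M:ℕ):ℝ)⁻¹ * ((((Finset.Icc 1 M).filter fun j => νA j = c ∧ ¬ QJ j).card : ℝ)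
        + (((Finset.Icc 1 M).filter fun j => νB j = c ∧ ¬ QJ' j).card : ℝ)) := by
    intro c _
    rw [hmuA, hmuB]
    have e1 : (((Finset.Icc 1 M).filter fun j => νA j = c).card : ℝ)
        - (((Finset.Icc 1 M).filter fun j => νB j = c).card : ℝ)
        = (((Finset.Icc 1 M).filter fun j => νA j = c ∧ ¬ QJ j).card : ℝ)
          - (((Finset.Icc 1 M).filter fun j => νB j = c ∧ ¬ QJ' j).card : ℝ) := by
      rw [hsplitA c, hsplitB c]
      push_cast
      rw [hbij c]
      ring
    rw [← mul_sub, abs_mul, abs_of_nonneg (inv_nonneg.2 hMR.le), e1]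
    apply mul_le_mul_of_nonneg_left _ (inv_nonneg.2 hMR.le)
    have h1 : (0:ℝ) ≤ (((Finset.Icc 1 M).filter fun j => νA j = c ∧ ¬ QJ j).card : ℝ) :=
      Nat.cast_nonneg _
    have h2 : (0:ℝ) ≤ (((Finset.Icc 1 M).filter fun j => νB j = c ∧ ¬ QJ' j).card : ℝ) :=
      Nat.cast_nonneg _
    rw [abs_sub_le_iff]
    constructor <;> linarith
  -- put it together
  calc ∑ c ∈ F, |muQ N x (g⁻¹ • c) - muQ N ((g : Cantor ≃ₜ Cantor) x) c|
      ≤ ∑ c ∈ F, ((M:ℕ):ℝ)⁻¹ * ((((Finset.Icc 1 M).filter fun j => νA j = c ∧ ¬ QJ j).card : ℝ)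
        + (((Finset.Icc 1 M).filter fun j => νB j = c ∧ ¬ QJ' j).card : ℝ)) :=
        Finset.sum_le_sum hperc
    _ = ((M:ℕ):ℝ)⁻¹ * ((((Finset.Icc 1 M).filter fun j => ¬ QJ j).card : ℝ)
        + (((Finset.Icc 1 M).filter fun j => ¬ QJ' j).card : ℝ)) := by
        rw [← Finset.mul_sum, Finset.sum_add_distrib, ← Nat.cast_sum, ← Nat.cast_sum,
          hfibA, hfibB]
    _ ≤ ((M:ℕ):ℝ)⁻¹ * ((3 * k0 + 2 : ℕ) + (3 * k0 + 2 : ℕ)) := by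
        apply mul_le_mul_of_nonneg_left _ (inv_nonneg.2 hMR.le)
        have c1 : (((Finset.Icc 1 M).filter fun j => ¬ QJ j).card : ℝ) ≤ ((3 * k0 + 2 : ℕ) : ℝ) := by
          exact_mod_cast htailA
        have c2 : (((Finset.Icc 1 M).filter fun j => ¬ QJ' j).card : ℝ) ≤ ((3 * k0 + 2 : ℕ) : ℝ) := by
          exact_mod_cast htailB
        linarith
    _ ≤ (6 * k0 + 4) / ((M:ℕ):ℝ) := by
        rw [div_eq_inv_mul]
        apply mul_le_mul_of_nonneg_left _ (inv_nonneg.2 hMR.le)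
        push_cast
        ring_nf
        linarith

open Filter Topology in
/-- the Cantor space is `(T,F)`-amenable: there is a sequence of continuous
maps `μ_N : {0,1}^ℕ → Prob(T/F)` with `sup_x ‖g·μ_N(x) − μ_N(g x)‖₁ → 0` for all `g ∈ T`. -/
theorem stmt13 :
    ∃ μ : ℕ → Cantor → (TGrp ⧸ FinT) → ℝ,
      (∀ N x c, 0 ≤ μ N x c) ∧
      (∀ N x, ∑' c : TGrp ⧸ FinT, μ N x c = 1) ∧
      (∀ N c, Continuous fun x => μ N x c) ∧
      ∀ g : TGrp,
        Tendsto
          (fun N => ⨆ x : Cantor,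
            ∑' c : TGrp ⧸ FinT, |μ N x (g⁻¹ • c) - μ N ((g : Cantor ≃ₜ Cantor) x) c|)
          atTop (𝓝 0) := by
  
  refine ⟨muQ, muQ_nonneg, muQ_tsum, fun N c => muQ_continuous N c, ?_⟩
  intro g
  obtain ⟨k0, H⟩ := ptrunc_of_mem_TGrp g.2
  have hbound : ∀ N, (⨆ x : Cantor,
      ∑' c : TGrp ⧸ FinT, |muQ N x (g⁻¹ • c) - muQ N ((g : Cantor ≃ₜ Cantor) x) c|)
      ≤ (6 * k0 + 4) / ((max 1 N : ℕ) : ℝ) := by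
    intro N
    apply Real.iSup_le (fun x => muQ_bound g k0 H N x)
    positivity
  have hnonneg : ∀ N, 0 ≤ ⨆ x : Cantor,
      ∑' c : TGrp ⧸ FinT, |muQ N x (g⁻¹ • c) - muQ N ((g : Cantor ≃ₜ Cantor) x) c| := by
    intro N
    have hb : BddAbove (Set.range fun x : Cantor =>
        ∑' c : TGrp ⧸ FinT, |muQ N x (g⁻¹ • c) - muQ N ((g : Cantor ≃ₜ Cantor) x) c|) := by
      refine ⟨(6 * k0 + 4) / ((max 1 N : ℕ) : ℝ), ?_⟩
      rintro _ ⟨x, rfl⟩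
      exact muQ_bound g k0 H N x
    refine le_trans (tsum_nonneg fun c => abs_nonneg _) (le_ciSup hb zeroSeq)
  apply tendsto_of_tendsto_of_tendsto_of_le_of_le (g := fun _ : ℕ => (0:ℝ))
    (h := fun N : ℕ => (6 * k0 + 4) / ((max 1 N : ℕ) : ℝ)) tendsto_const_nhds ?_
    hnonneg hbound
  have h1 : Tendsto (fun N : ℕ => ((max 1 N : ℕ) : ℝ)) atTop atTop :=
    tendsto_natCast_atTop_atTop.comp (tendsto_atTop_mono (fun N => le_max_right 1 N) tendsto_id)
  exact Tendsto.div_atTop tendsto_const_nhds h1
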